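/- arXiv:2304.06499 — 7 statements merged into one kernel-verified Lean document; each statement's English description precedes it below -/
import Mathlib

section
/- Let K_SR > 0, V₀ > 0, let W = (W₁, W₂) ∈ ℝ² be a constant wind vector, and let 0 < V_s ≤ V_max be speed bounds with ‖W‖ < V_s. Define the straight-glide altitude-loss function M(p) = inf{ t·K_SR·(‖v‖⁴ + V₀⁴)/‖v‖ : t > 0, v ∈ ℝ², V_s ≤ ‖v‖ ≤ V_max, t·(v + W) = p } for p ∈ ℝ². Then for every t_f > 0, every continuous V : [0, t_f] → ℝ with V_s ≤ V(t) ≤ V_max for all t, and every continuous ψ : [0, t_f] → ℝ such that ∫₀^{t_f} (V(t)·cos ψ(t) + W₁) dt = p₁ and ∫₀^{t_f} (V(t)·sin ψ(t) + W₂) dt = p₂ with p = (p₁, p₂) ≠ 0, the total altitude loss satisfies ∫₀^{t_f} K_SR·(V(t)⁴ + V₀⁴)/V(t) dt ≥ M(p). In other words, no admissible gliding trajectory with varying speed and heading loses less altitude than the best constant-speed, fixed-heading straight glide between the same two ground points. -/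
set_option maxHeartbeats 1000000 in
private lemma glide_key (K_SR V₀ Vs Vmax b2 a : ℝ) (hK : 0 < K_SR) (hV₀ : 0 < V₀) (hVs : 0 < Vs)
    (hb2 : 0 ≤ b2)
    (g : ℝ → ℝ) (hgdef : g = fun s => K_SR * (s ^ 4 + V₀ ^ 4) / s)
    (S : ℝ → ℝ) (hSdef : S = fun s => Real.sqrt (s ^ 2 - b2))
    (r : ℝ → ℝ) (hrdef : r = fun s => a + S s)
    (hSsq : ∀ s : ℝ, Vs ≤ s → (S s) ^ 2 = s ^ 2 - b2)
    (hSpos : ∀ s : ℝ, Vs ≤ s → 0 < S s)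
    (hrpos : ∀ s : ℝ, Vs ≤ s → 0 < r s)
    (s' : ℝ) (hs'mem : s' ∈ Set.Icc Vs Vmax)
    (lam : ℝ) (hlam_nn : 0 ≤ lam)
    (hmin : ∀ s ∈ Set.Icc Vs Vmax, lam * r s ≤ g s)
    (hgs' : g s' = lam * r s')
    (s : ℝ) (hs : s ∈ Set.Icc Vs Vmax) :
    lam * (r s' + (s - s') * (s' / S s')) ≤ g s := by
  have hs'pos : 0 < s' := lt_of_lt_of_le hVs hs'mem.1
  have hSs' : 0 < S s' := hSpos s' hs'mem.1
  set q : ℝ → ℝ := fun θ => r (s' + θ * (s - s')) with hq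
  have hq0 : q 0 = r s' := by simp [hq]
  -- derivative of q at 0
  have hqder : HasDerivAt q ((s - s') * (s' / S s')) 0 := by
    have h1 : HasDerivAt (fun θ : ℝ => (s' + θ * (s - s')) ^ 2 - b2) (2 * s' * (s - s')) 0 := by
      have h0 : HasDerivAt (fun θ : ℝ => s' + θ * (s - s')) (s - s') 0 := by
        simpa using (hasDerivAt_id (0:ℝ)).mul_const (s - s') |>.const_add s'
      have := (h0.pow 2).sub_const b2
      simpa using this
    have hne : (s' + 0 * (s - s')) ^ 2 - b2 ≠ 0 := by
      have h5 := hSsq s' hs'mem.1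
      have h6 := hSpos s' hs'mem.1
      simp only [zero_mul, add_zero]
      nlinarith
    have h2 := h1.sqrt hne
    have h3 : HasDerivAt (fun θ : ℝ => a + Real.sqrt ((s' + θ * (s - s')) ^ 2 - b2))
        (2 * s' * (s - s') / (2 * Real.sqrt ((s' + 0 * (s - s')) ^ 2 - b2))) 0 := h2.const_add a
    have heq : (fun θ : ℝ => a + Real.sqrt ((s' + θ * (s - s')) ^ 2 - b2)) = q := by
      funext θ; simp [hq, hrdef, hSdef]
    rw [heq] at h3
    convert h3 using 1
    have hS' : Real.sqrt ((s' + 0 * (s - s')) ^ 2 - b2) = S s' := by simp [hSdef]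
    rw [hS']
    field_simp
  -- eventual inequality for θ ∈ (0,1]
  have hev : ∀ θ ∈ Set.Ioc (0:ℝ) 1, lam * ((q θ - q 0) / θ + q 0) ≤ g s := by
    intro θ hθ
    obtain ⟨hθ0, hθ1⟩ := hθ
    have hθ1' : (0:ℝ) ≤ 1 - θ := by linarith
    have hσmem : s' + θ * (s - s') ∈ Set.Icc Vs Vmax := by
      constructor
      · rcases le_or_gt s' s with h | h
        · nlinarith [hs'mem.1]
        · nlinarith [hs.1]
      · rcases le_or_gt s' s with h | h
        · nlinarith [hs.2]
        · nlinarith [hs'mem.2]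
    have h1 : lam * q θ ≤ g (s' + θ * (s - s')) := hmin _ hσmem
    have hσpos : 0 < s' + θ * (s - s') := lt_of_lt_of_le hVs hσmem.1
    have hspos : 0 < s := lt_of_lt_of_le hVs hs.1
    have gform : ∀ x : ℝ, 0 < x → g x = K_SR * x ^ 3 + K_SR * V₀ ^ 4 * (1 / x) := by
      intro x hx
      simp only [hgdef]
      field_simp
    have hconv : g (s' + θ * (s - s')) ≤ (1 - θ) * g s' + θ * g s := by
      have c1 : (s' + θ * (s - s')) ^ 3 ≤ (1 - θ) * s' ^ 3 + θ * s ^ 3 := by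
        have hpos : (0:ℝ) ≤ (1 - θ) * s' + θ * s + s' + s := by nlinarith
        nlinarith [mul_nonneg (mul_nonneg (mul_nonneg hθ0.le hθ1') (sq_nonneg (s - s'))) hpos]
      have c2 : 1 / (s' + θ * (s - s')) ≤ (1 - θ) * (1 / s') + θ * (1 / s) := by
        have e1 : (1 - θ) * (1 / s') + θ * (1 / s) = ((1 - θ) * s + θ * s') / (s' * s) := by
          field_simp
        rw [e1, div_le_div_iff₀ hσpos (by positivity)]
        nlinarith [mul_nonneg (mul_nonneg hθ0.le hθ1') (sq_nonneg (s - s'))]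
      rw [gform _ hσpos, gform _ hs'pos, gform _ hspos]
      have d1 := mul_le_mul_of_nonneg_left c1 hK.le
      have d2 := mul_le_mul_of_nonneg_left c2 (by positivity : (0:ℝ) ≤ K_SR * V₀ ^ 4)
      nlinarith [d1, d2]
    have h2 : lam * (q θ - (1 - θ) * q 0) ≤ θ * g s := by
      rw [hq0]
      nlinarith [h1, hconv, hgs']
    have h3 : lam * ((q θ - q 0) / θ + q 0) = lam * (q θ - (1 - θ) * q 0) / θ := by
      have e2 : (q θ - q 0) / θ + q 0 = (q θ - (1 - θ) * q 0) / θ := by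
        field_simp
        ring
      rw [e2, mul_div_assoc]
    rw [h3, div_le_iff₀ hθ0]
    nlinarith [h2]
  -- take the limit θ → 0⁺
  have htend : Filter.Tendsto (fun θ => lam * ((q θ - q 0) / θ + q 0))
      (nhdsWithin 0 (Set.Ioi 0)) (nhds (lam * ((s - s') * (s' / S s') + r s'))) := by
    apply Filter.Tendsto.const_mul
    rw [← hq0]
    apply Filter.Tendsto.add_const
    have hslope := hasDerivAt_iff_tendsto_slope.mp hqder
    have h2 := hslope.mono_left (nhdsWithin_mono 0 (fun x hx => ne_of_gt hx))
    refine h2.congr ?_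
    intro x; simp [slope_def_field]
  have hfinal : lam * ((s - s') * (s' / S s') + r s') ≤ g s := by
    refine le_of_tendsto htend ?_
    filter_upwards [Ioc_mem_nhdsGT_of_mem (Set.mem_Ico.mpr ⟨le_refl 0, zero_lt_one⟩)] with θ hθ
    exact hev θ hθ
  calc lam * (r s' + (s - s') * (s' / S s')) = lam * ((s - s') * (s' / S s') + r s') := by ring
    _ ≤ g s := hfinal


noncomputable def straightGlideLoss (K_SR V₀ Vs Vmax : ℝ)
    (W : EuclideanSpace ℝ (Fin 2)) (p : EuclideanSpace ℝ (Fin 2)) : ℝ :=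
  sInf {z : ℝ | ∃ t : ℝ, ∃ v : EuclideanSpace ℝ (Fin 2),
    0 < t ∧ Vs ≤ ‖v‖ ∧ ‖v‖ ≤ Vmax ∧ t • (v + W) = p ∧
    z = t * (K_SR * (‖v‖ ^ 4 + V₀ ^ 4) / ‖v‖)}

set_option maxHeartbeats 1600000 in
/-- No admissible gliding trajectory with varying speed and heading loses less
altitude than the best constant-speed, fixed-heading straight glide between the
same two ground points. -/
theorem straight_glide_is_altitude_loss_optimal
    (K_SR V₀ Vs Vmax : ℝ) (hK : 0 < K_SR) (hV₀ : 0 < V₀)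
    (W : EuclideanSpace ℝ (Fin 2))
    (hVs : 0 < Vs) (hVsVmax : Vs ≤ Vmax) (hW : ‖W‖ < Vs)
    (t_f : ℝ) (ht_f : 0 < t_f)
    (V ψ : ℝ → ℝ)
    (hVcont : ContinuousOn V (Set.Icc 0 t_f))
    (hψcont : ContinuousOn ψ (Set.Icc 0 t_f))
    (hVbound : ∀ t ∈ Set.Icc (0:ℝ) t_f, Vs ≤ V t ∧ V t ≤ Vmax)
    (p : EuclideanSpace ℝ (Fin 2)) (hp : p ≠ 0)
    (hx : (∫ t in (0:ℝ)..t_f, (V t * Real.cos (ψ t) + W 0)) = p 0)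
    (hy : (∫ t in (0:ℝ)..t_f, (V t * Real.sin (ψ t) + W 1)) = p 1) :
    straightGlideLoss K_SR V₀ Vs Vmax W p ≤
      ∫ t in (0:ℝ)..t_f, K_SR * ((V t) ^ 4 + V₀ ^ 4) / V t := by
  have hWnn : (0:ℝ) ≤ ‖W‖ := norm_nonneg W
  have hpn : (0:ℝ) < ‖p‖ := norm_pos_iff.mpr hp
  set g : ℝ → ℝ := fun s => K_SR * (s ^ 4 + V₀ ^ 4) / s with hgdef
  set n : ℝ := ‖p‖ with hn
  set u : EuclideanSpace ℝ (Fin 2) := (n⁻¹ : ℝ) • p with hu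
  have hun : ‖u‖ = 1 := by
    rw [hu, norm_smul, Real.norm_eq_abs, abs_of_nonneg (inv_nonneg.mpr hpn.le)]
    field_simp
    exact hn.symm
  set a : ℝ := (inner ℝ W u : ℝ) with ha
  have haW : |a| ≤ ‖W‖ := by
    calc |a| ≤ ‖W‖ * ‖u‖ := abs_real_inner_le_norm W u
    _ = ‖W‖ := by rw [hun, mul_one]
  set b2 : ℝ := ‖W‖ ^ 2 - a ^ 2 with hb2def
  have hb2 : 0 ≤ b2 := by
    have h1 : a ^ 2 ≤ ‖W‖ ^ 2 := by
      have := sq_abs a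
      nlinarith [abs_nonneg a]
    simp only [hb2def]; linarith
  set S : ℝ → ℝ := fun s => Real.sqrt (s ^ 2 - b2) with hSdef
  set r : ℝ → ℝ := fun s => a + S s with hrdef
  have hs2b2 : ∀ s : ℝ, Vs ≤ s → a ^ 2 < s ^ 2 - b2 := by
    intro s hs
    have h1 : ‖W‖ < s := lt_of_lt_of_le hW hs
    simp only [hb2def]
    nlinarith
  have hSrpos : ∀ s : ℝ, Vs ≤ s → |a| < S s := by
    intro s hs
    have h1 := hs2b2 s hs
    rw [hSdef]
    rw [show s ^ 2 - b2 = (Real.sqrt (s ^ 2 - b2)) ^ 2 from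
      (Real.sq_sqrt (by nlinarith [sq_nonneg a])).symm] at h1
    have h2 : (0:ℝ) ≤ Real.sqrt (s ^ 2 - b2) := Real.sqrt_nonneg _
    nlinarith [abs_nonneg a, sq_abs a]
  have hSpos : ∀ s : ℝ, Vs ≤ s → 0 < S s := fun s hs =>
    lt_of_le_of_lt (abs_nonneg a) (hSrpos s hs)
  have hrpos : ∀ s : ℝ, Vs ≤ s → 0 < r s := by
    intro s hs
    have := hSrpos s hs
    have := neg_abs_le a
    simp only [hrdef]; linarith
  have hSsq : ∀ s : ℝ, Vs ≤ s → (S s) ^ 2 = s ^ 2 - b2 := by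
    intro s hs
    have h1 := hs2b2 s hs
    exact Real.sq_sqrt (by nlinarith [sq_nonneg a])
  have hgnn : ∀ s : ℝ, Vs ≤ s → 0 ≤ g s := by
    intro s hs
    have h1 : 0 < s := lt_of_lt_of_le hVs hs
    simp only [hgdef]
    positivity
  -- minimizer of g / r on [Vs, Vmax]
  have hrcont : ContinuousOn r (Set.Icc Vs Vmax) := by
    simp only [hrdef]
    exact continuousOn_const.add
      ((Real.continuous_sqrt.comp ((continuous_pow 2).sub continuous_const)).continuousOn)
  have hgcont : ContinuousOn g (Set.Icc Vs Vmax) := by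
    simp only [hgdef]
    exact ContinuousOn.div
      (continuous_const.mul ((continuous_pow 4).add continuous_const)).continuousOn
      continuousOn_id (fun s hs => ne_of_gt (lt_of_lt_of_le hVs hs.1))
  obtain ⟨s', hs'mem, hs'min⟩ := isCompact_Icc.exists_isMinOn
    (Set.nonempty_Icc.mpr hVsVmax)
    (hgcont.div hrcont (fun s hs => ne_of_gt (hrpos s hs.1)))
  have hs'Vs : Vs ≤ s' := hs'mem.1
  have hs'pos : 0 < s' := lt_of_lt_of_le hVs hs'Vs
  have hrs' : 0 < r s' := hrpos s' hs'Vs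
  have hSs' : 0 < S s' := hSpos s' hs'Vs
  set lam : ℝ := g s' / r s' with hlam
  have hlam_nn : 0 ≤ lam := div_nonneg (hgnn s' hs'Vs) hrs'.le
  have hmin : ∀ s ∈ Set.Icc Vs Vmax, lam * r s ≤ g s := by
    intro s hs
    have h1 : g s' / r s' ≤ g s / r s := isMinOn_iff.mp hs'min s hs
    rw [hlam, ← le_div_iff₀ (hrpos s hs.1)]
    exact h1
  have hgs' : g s' = lam * r s' := by
    rw [hlam, div_mul_cancel₀ _ (ne_of_gt hrs')]
  -- the key scalar inequality
  have key : ∀ s ∈ Set.Icc Vs Vmax, lam * (r s' + (s - s') * (s' / S s')) ≤ g s :=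
    fun s hs => glide_key K_SR V₀ Vs Vmax b2 a hK hV₀ hVs hb2 g hgdef S hSdef r hrdef
      hSsq hSpos hrpos s' hs'mem lam hlam_nn hmin hgs' s hs
  -- the candidate straight glide
  set t' : ℝ := n / r s' with ht'
  have ht'pos : 0 < t' := div_pos hpn hrs'
  set v' : EuclideanSpace ℝ (Fin 2) := r s' • u - W with hv'
  have hWu : (inner ℝ u W : ℝ) = a := by rw [ha, real_inner_comm]
  have hv'W : (inner ℝ v' W : ℝ) = a * S s' - b2 := by
    rw [hv', inner_sub_left, real_inner_smul_left, hWu, real_inner_self_eq_norm_sq]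
    simp only [hb2def, hrdef]
    ring
  have hv'sq : ‖v'‖ ^ 2 = s' ^ 2 := by
    rw [hv', norm_sub_sq_real, real_inner_smul_left, hWu, norm_smul, Real.norm_eq_abs,
      abs_of_pos hrs', hun, mul_one]
    have h1 := hSsq s' hs'Vs
    rw [hb2def] at h1
    simp only [hrdef]
    nlinarith [h1]
  have hv'norm : ‖v'‖ = s' := by
    calc ‖v'‖ = Real.sqrt (‖v'‖ ^ 2) := (Real.sqrt_sq (norm_nonneg _)).symm
      _ = Real.sqrt (s' ^ 2) := by rw [hv'sq]
      _ = s' := Real.sqrt_sq hs'pos.le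
  have hfeas : t' • (v' + W) = p := by
    rw [hv', sub_add_cancel, smul_smul, ht', div_mul_cancel₀ _ (ne_of_gt hrs'), hu,
      smul_smul, mul_inv_cancel₀ (ne_of_gt hpn), one_smul]
  -- coordinates
  have hcoord : ∀ x y : EuclideanSpace ℝ (Fin 2), (inner ℝ x y : ℝ) = x 0 * y 0 + x 1 * y 1 := by
    intro x y
    rw [PiLp.inner_apply]
    simp [Fin.sum_univ_two]
    ring
  have hv'self : v' 0 ^ 2 + v' 1 ^ 2 = s' ^ 2 := by
    have := real_inner_self_eq_norm_sq v'
    rw [hcoord v' v', hv'norm] at this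
    nlinarith [this]
  -- pointwise inequality along the trajectory
  set C0 : ℝ := (lam / S s') * v' 0 with hC0
  set C1 : ℝ := (lam / S s') * v' 1 with hC1
  have hpt : ∀ t ∈ Set.Icc (0:ℝ) t_f,
      C0 * (V t * Real.cos (ψ t) + W 0) + C1 * (V t * Real.sin (ψ t) + W 1)
        ≤ K_SR * ((V t) ^ 4 + V₀ ^ 4) / V t := by
    intro t ht
    obtain ⟨hV1, hV2⟩ := hVbound t ht
    have hVpos : 0 < V t := lt_of_lt_of_le hVs hV1
    have hCS : v' 0 * (V t * Real.cos (ψ t)) + v' 1 * (V t * Real.sin (ψ t)) ≤ s' * V t := by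
      have h1 : (v' 0 * Real.cos (ψ t) + v' 1 * Real.sin (ψ t)) ^ 2 ≤ s' ^ 2 := by
        have h2 := Real.sin_sq_add_cos_sq (ψ t)
        nlinarith [sq_nonneg (v' 0 * Real.sin (ψ t) - v' 1 * Real.cos (ψ t)), hv'self]
      have h3 : v' 0 * Real.cos (ψ t) + v' 1 * Real.sin (ψ t) ≤ s' := by
        nlinarith [hs'pos]
      nlinarith [h3, hVpos]
    have hWc : v' 0 * W 0 + v' 1 * W 1 = a * S s' - b2 := by
      rw [← hcoord v' W]
      exact hv'W
    have hkey := key (V t) ⟨hV1, hV2⟩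
    have hlS : 0 ≤ lam / S s' := div_nonneg hlam_nn hSs'.le
    have e1 : C0 * (V t * Real.cos (ψ t) + W 0) + C1 * (V t * Real.sin (ψ t) + W 1)
        = (lam / S s') * ((v' 0 * (V t * Real.cos (ψ t)) + v' 1 * (V t * Real.sin (ψ t)))
            + (v' 0 * W 0 + v' 1 * W 1)) := by
      rw [hC0, hC1]
      ring
    rw [e1, hWc]
    have e2 : (lam / S s') * (s' * V t + (a * S s' - b2))
        = lam * (r s' + (V t - s') * (s' / S s')) := by
      have h4 := hSsq s' hs'Vs
      rw [hrdef]
      have e2' : (s' * V t + (a * S s' - b2)) / S s'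
          = (a + S s') + (V t - s') * (s' / S s') := by
        field_simp
        linarith [h4]
      rw [div_mul_eq_mul_div, mul_div_assoc, e2']
    calc (lam / S s') * ((v' 0 * (V t * Real.cos (ψ t)) + v' 1 * (V t * Real.sin (ψ t)))
            + (a * S s' - b2))
        ≤ (lam / S s') * (s' * V t + (a * S s' - b2)) := by
          apply mul_le_mul_of_nonneg_left _ hlS
          linarith [hCS]
      _ = lam * (r s' + (V t - s') * (s' / S s')) := e2
      _ ≤ g (V t) := hkey
  -- integrability
  have hIcc : Set.uIcc (0:ℝ) t_f = Set.Icc 0 t_f := Set.uIcc_of_le ht_f.le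
  have hi1 : IntervalIntegrable (fun t => V t * Real.cos (ψ t) + W 0)
      MeasureTheory.volume 0 t_f := by
    apply ContinuousOn.intervalIntegrable
    rw [hIcc]
    exact (hVcont.mul (Real.continuous_cos.comp_continuousOn hψcont)).add continuousOn_const
  have hi2 : IntervalIntegrable (fun t => V t * Real.sin (ψ t) + W 1)
      MeasureTheory.volume 0 t_f := by
    apply ContinuousOn.intervalIntegrable
    rw [hIcc]
    exact (hVcont.mul (Real.continuous_sin.comp_continuousOn hψcont)).add continuousOn_const
  have hi3 : IntervalIntegrable (fun t => K_SR * ((V t) ^ 4 + V₀ ^ 4) / V t)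
      MeasureTheory.volume 0 t_f := by
    apply ContinuousOn.intervalIntegrable
    rw [hIcc]
    exact ContinuousOn.div
      (continuousOn_const.mul ((hVcont.pow 4).add continuousOn_const)) hVcont
      (fun t ht => ne_of_gt (lt_of_lt_of_le hVs (hVbound t ht).1))
  -- the integral bound
  have hmono : (∫ t in (0:ℝ)..t_f,
        (C0 * (V t * Real.cos (ψ t) + W 0) + C1 * (V t * Real.sin (ψ t) + W 1)))
      ≤ ∫ t in (0:ℝ)..t_f, K_SR * ((V t) ^ 4 + V₀ ^ 4) / V t :=
    intervalIntegral.integral_mono_on ht_f.le ((hi1.const_mul C0).add (hi2.const_mul C1))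
      hi3 hpt
  have hsplit : (∫ t in (0:ℝ)..t_f,
        (C0 * (V t * Real.cos (ψ t) + W 0) + C1 * (V t * Real.sin (ψ t) + W 1)))
      = C0 * p 0 + C1 * p 1 := by
    rw [intervalIntegral.integral_add (hi1.const_mul C0) (hi2.const_mul C1),
      intervalIntegral.integral_const_mul, intervalIntegral.integral_const_mul, hx, hy]
  -- value of the candidate
  have hip : (inner ℝ v' p : ℝ) = n * S s' := by
    have hup : (inner ℝ u p : ℝ) = n := by
      rw [hu, real_inner_smul_left, real_inner_self_eq_norm_sq, ← hn]
      field_simp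
    have hWp : (inner ℝ W p : ℝ) = n * a := by
      have h5 : a = n⁻¹ * (inner ℝ W p : ℝ) := by rw [ha, hu, real_inner_smul_right]
      rw [h5, ← mul_assoc, mul_inv_cancel₀ (ne_of_gt hpn), one_mul]
    rw [hv', inner_sub_left, real_inner_smul_left, hup, hWp, hrdef]
    ring
  have hval : C0 * p 0 + C1 * p 1 = lam * n := by
    have h1 : C0 * p 0 + C1 * p 1 = (lam / S s') * (inner ℝ v' p : ℝ) := by
      rw [hcoord v' p, hC0, hC1]
      ring
    rw [h1, hip]
    field_simp
  -- conclusion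
  have hz'val : t' * (K_SR * (s' ^ 4 + V₀ ^ 4) / s') = lam * n := by
    have : K_SR * (s' ^ 4 + V₀ ^ 4) / s' = g s' := by rw [hgdef]
    rw [this, hgs', ht']
    field_simp
  rw [straightGlideLoss]
  apply csInf_le_of_le (b := t' * (K_SR * (s' ^ 4 + V₀ ^ 4) / s'))
  · refine ⟨0, fun z hz => ?_⟩
    obtain ⟨t, v, htpos, hv1, hv2, hfe, hzeq⟩ := hz
    have hvpos : 0 < ‖v‖ := lt_of_lt_of_le hVs hv1
    rw [hzeq]
    positivity
  · refine ⟨t', v', ht'pos, ?_, ?_, hfeas, ?_⟩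
    · rw [hv'norm]; exact hs'Vs
    · rw [hv'norm]; exact hs'mem.2
    · rw [hv'norm]
  · rw [hz'val, ← hval, ← hsplit]
    exact hmono
end

section
/- Let K_SR > 0, V₀ > 0, let W ∈ ℝ² be a constant wind vector, and let 0 < V_s ≤ V_max with ‖W‖ < V_s. Define M(p) = inf{ t·K_SR·(‖v‖⁴ + V₀⁴)/‖v‖ : t > 0, v ∈ ℝ², V_s ≤ ‖v‖ ≤ V_max, t·(v + W) = p } for p ∈ ℝ². Then M is subadditive on nonzero displacements: for all p, q ∈ ℝ² with p ≠ 0, q ≠ 0 and p + q ≠ 0, one has M(p + q) ≤ M(p) + M(q). (This is the consistency property of the straight-glide altitude-loss heuristic used in the A* search: the altitude loss of the best straight glide over a displacement p + q is at most the combined altitude loss of best straight glides over p and over q.) -/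
/-- Existence of a straight glide at prescribed airspeed `r` reaching `d`,
with time at most `T`, given that at time `T` the point `d` is inside the
reachable disk. -/
lemma exists_glide (W d : EuclideanSpace ℝ (Fin 2)) (r T : ℝ)
    (hd : d ≠ 0) (hT : 0 < T) (h : ‖d - T • W‖ ≤ T * r) :
    ∃ t : ℝ, ∃ v : EuclideanSpace ℝ (Fin 2),
      0 < t ∧ t ≤ T ∧ ‖v‖ = r ∧ t • (v + W) = d := by
  set g : ℝ → ℝ := fun t => ‖d - t • W‖ - t * r with hg
  have hcont : ContinuousOn g (Set.Icc 0 T) := by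
    apply Continuous.continuousOn; fun_prop
  have h0 : 0 < g 0 := by simp [hg, hd]
  have hTle : g T ≤ 0 := by simp [hg]; linarith
  have : (0 : ℝ) ∈ Set.Icc (g T) (g 0) := ⟨hTle, h0.le⟩
  obtain ⟨t, ht, hgt⟩ := intermediate_value_Icc' hT.le hcont this
  simp only [hg] at hgt
  have htpos : 0 < t := by
    rcases ht.1.lt_or_eq with h' | h'
    · exact h'
    · exfalso; rw [← h'] at hgt; simp at hgt; exact hd hgt
  refine ⟨t, t⁻¹ • d - W, htpos, ht.2, ?_, ?_⟩
  · have : ‖t⁻¹ • d - W‖ = t⁻¹ * ‖d - t • W‖ := by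
      rw [← norm_smul_of_nonneg (by positivity : (0:ℝ) ≤ t⁻¹)]
      congr 1
      rw [smul_sub, smul_smul, inv_mul_cancel₀ htpos.ne', one_smul]
    rw [this]
    have : ‖d - t • W‖ = t * r := by linarith [hgt]
    rw [this, inv_mul_cancel_left₀ htpos.ne']
  · rw [sub_add_cancel, smul_smul, mul_inv_cancel₀ htpos.ne', one_smul]

/-- Convexity of the sink-rate-per-distance function `x ↦ K (x⁴ + V₀⁴)/x`
on positive reals. -/
lemma sinkfun_convex (K_SR V₀ : ℝ) (hK : 0 ≤ K_SR) :
    ConvexOn ℝ (Set.Ioi 0) (fun x : ℝ => K_SR * (x ^ 4 + V₀ ^ 4) / x) := by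
  have h1 : ConvexOn ℝ (Set.Ioi (0:ℝ)) (fun x : ℝ =>
      K_SR • (x ^ (3:ℤ)) + (K_SR * V₀ ^ 4) • (x ^ (-1:ℤ))) :=
    ((convexOn_zpow 3).smul hK).add ((convexOn_zpow (-1)).smul (by positivity))
  have : Set.EqOn (fun x : ℝ => K_SR • (x ^ (3:ℤ)) + (K_SR * V₀ ^ 4) • (x ^ (-1:ℤ)))
      (fun x : ℝ => K_SR * (x ^ 4 + V₀ ^ 4) / x) (Set.Ioi 0) := by
    intro x hx
    have hx0 : x ≠ 0 := ne_of_gt hx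
    have h3 : x ^ (3:ℤ) = x ^ (3:ℕ) := zpow_natCast x 3
    simp only [smul_eq_mul, zpow_neg_one, h3]
    field_simp
  exact h1.congr this

/-- The straight-glide altitude-loss heuristic is subadditive on nonzero
displacements: the altitude loss of the best straight glide over `p + q` is at
most the combined altitude loss of best straight glides over `p` and over `q`.
This is the consistency property of the heuristic used in the A* search. -/
theorem straightGlideLoss_subadditive
    (K_SR V₀ Vs Vmax : ℝ) (hK : 0 < K_SR) (hV₀ : 0 < V₀)
    (W : EuclideanSpace ℝ (Fin 2))
    (hVs : 0 < Vs) (hVsVmax : Vs ≤ Vmax) (hW : ‖W‖ < Vs)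
    (p q : EuclideanSpace ℝ (Fin 2)) (hp : p ≠ 0) (hq : q ≠ 0) (hpq : p + q ≠ 0) :
    straightGlideLoss K_SR V₀ Vs Vmax W (p + q) ≤
      straightGlideLoss K_SR V₀ Vs Vmax W p + straightGlideLoss K_SR V₀ Vs Vmax W q := by
  set S : EuclideanSpace ℝ (Fin 2) → Set ℝ := fun d =>
    {z : ℝ | ∃ t : ℝ, ∃ v : EuclideanSpace ℝ (Fin 2),
      0 < t ∧ Vs ≤ ‖v‖ ∧ ‖v‖ ≤ Vmax ∧ t • (v + W) = d ∧
      z = t * (K_SR * (‖v‖ ^ 4 + V₀ ^ 4) / ‖v‖)} with hS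
  -- nonemptiness
  have hne : ∀ d : EuclideanSpace ℝ (Fin 2), d ≠ 0 → (S d).Nonempty := by
    intro d hd
    have hWs : 0 < Vs - ‖W‖ := by linarith
    set T := ‖d‖ / (Vs - ‖W‖) with hTdef
    have hTpos : 0 < T := div_pos (norm_pos_iff.2 hd) hWs
    have hb : ‖d - T • W‖ ≤ T * Vs := by
      have h1 : ‖d - T • W‖ ≤ ‖d‖ + T * ‖W‖ := by
        calc ‖d - T • W‖ ≤ ‖d‖ + ‖T • W‖ := norm_sub_le _ _
        _ = ‖d‖ + T * ‖W‖ := by rw [norm_smul, Real.norm_eq_abs, abs_of_pos hTpos]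
      have h2 : ‖d‖ = T * (Vs - ‖W‖) := by
        field_simp [hTdef]
        rw [hTdef, div_mul_cancel₀ _ hWs.ne']
      nlinarith
    obtain ⟨t, v, ht, htT, hv, hvd⟩ := exists_glide W d Vs T hd hTpos hb
    exact ⟨_, t, v, ht, hv.ge, hv.le.trans hVsVmax, hvd, rfl⟩
  -- lower bound
  have hbdd : ∀ d : EuclideanSpace ℝ (Fin 2), BddBelow (S d) := by
    intro d
    refine ⟨0, fun z hz => ?_⟩
    obtain ⟨t, v, ht, hv1, _, _, hzeq⟩ := hz
    have hv0 : 0 < ‖v‖ := lt_of_lt_of_le hVs hv1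
    rw [hzeq]; positivity
  -- key step: combination
  have key : ∀ a ∈ S p, ∀ b ∈ S q, sInf (S (p + q)) ≤ a + b := by
    rintro a ⟨t₁, v₁, ht₁, hv₁l, hv₁u, hd₁, ha⟩ b ⟨t₂, v₂, ht₂, hv₂l, hv₂u, hd₂, hb⟩
    set T := t₁ + t₂ with hTdef
    have hTpos : 0 < T := by positivity
    set r := (t₁ * ‖v₁‖ + t₂ * ‖v₂‖) / T with hrdef
    have hrpos : 0 < r := by
      apply div_pos _ hTpos
      have h1 : 0 < ‖v₁‖ := lt_of_lt_of_le hVs hv₁l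
      have h2 : 0 < ‖v₂‖ := lt_of_lt_of_le hVs hv₂l
      positivity
    have hrl : Vs ≤ r := by
      rw [hrdef, le_div_iff₀ hTpos]
      nlinarith
    have hru : r ≤ Vmax := by
      rw [hrdef, div_le_iff₀ hTpos]
      nlinarith
    -- geometric bound
    have hgeom : ‖(p + q) - T • W‖ ≤ T * r := by
      have : (p + q) - T • W = t₁ • v₁ + t₂ • v₂ := by
        rw [← hd₁, ← hd₂]
        simp [smul_add, hTdef, add_smul]
        abel
      rw [this]
      have : T * r = t₁ * ‖v₁‖ + t₂ * ‖v₂‖ := by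
        field_simp [hrdef]
        rw [hrdef, mul_div_assoc', mul_div_cancel_left₀ _ hTpos.ne']
      rw [this]
      calc ‖t₁ • v₁ + t₂ • v₂‖ ≤ ‖t₁ • v₁‖ + ‖t₂ • v₂‖ := norm_add_le _ _
      _ = t₁ * ‖v₁‖ + t₂ * ‖v₂‖ := by
          rw [norm_smul, norm_smul, Real.norm_eq_abs, Real.norm_eq_abs,
            abs_of_pos ht₁, abs_of_pos ht₂]
    obtain ⟨t, v, ht, htT, hv, hvd⟩ := exists_glide W (p + q) r T hpq hTpos hgeom
    have hmem : t * (K_SR * (‖v‖ ^ 4 + V₀ ^ 4) / ‖v‖) ∈ S (p + q) :=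
      ⟨t, v, ht, hv.symm ▸ hrl, hv.symm ▸ hru, hvd, rfl⟩
    have hfr : 0 ≤ K_SR * (r ^ 4 + V₀ ^ 4) / r := by positivity
    -- convexity
    have hconv := (sinkfun_convex K_SR V₀ hK.le).2
      (Set.mem_Ioi.2 (lt_of_lt_of_le hVs hv₁l))
      (Set.mem_Ioi.2 (lt_of_lt_of_le hVs hv₂l))
      (le_of_lt (div_pos ht₁ hTpos)) (le_of_lt (div_pos ht₂ hTpos))
      (by field_simp; exact hTdef.symm)
    have hcomb : (t₁ / T) • ‖v₁‖ + (t₂ / T) • ‖v₂‖ = r := by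
      simp only [smul_eq_mul]
      field_simp [hrdef]
      rw [hrdef, mul_div_assoc', mul_div_cancel_left₀ _ hTpos.ne']
    rw [hcomb] at hconv
    simp only [smul_eq_mul] at hconv
    have hbound : t * (K_SR * (‖v‖ ^ 4 + V₀ ^ 4) / ‖v‖) ≤ a + b := by
      rw [hv]
      calc t * (K_SR * (r ^ 4 + V₀ ^ 4) / r)
          ≤ T * (K_SR * (r ^ 4 + V₀ ^ 4) / r) := by
            apply mul_le_mul_of_nonneg_right htT hfr
      _ ≤ T * (t₁ / T * (K_SR * (‖v₁‖ ^ 4 + V₀ ^ 4) / ‖v₁‖)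
              + t₂ / T * (K_SR * (‖v₂‖ ^ 4 + V₀ ^ 4) / ‖v₂‖)) := by
            apply mul_le_mul_of_nonneg_left hconv hTpos.le
      _ = a + b := by
            rw [ha, hb]
            generalize (K_SR * (‖v₁‖ ^ 4 + V₀ ^ 4) / ‖v₁‖) = A
            generalize (K_SR * (‖v₂‖ ^ 4 + V₀ ^ 4) / ‖v₂‖) = B
            field_simp
    exact le_trans (csInf_le (hbdd _) hmem) hbound
  -- conclude
  show sInf (S (p + q)) ≤ sInf (S p) + sInf (S q)
  have h1 : sInf (S (p + q)) - sInf (S q) ≤ sInf (S p) := by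
    apply le_csInf (hne p hp)
    intro a ha
    rw [sub_le_iff_le_add]
    rw [← sub_le_iff_le_add']
    apply le_csInf (hne q hq)
    intro b hb
    rw [sub_le_iff_le_add']
    exact key a ha b hb
  linarith
end

section
/- Let K_SR > 0, V₀ > 0 and W∥, W⊥ ∈ ℝ, and set V_b = √(W⊥² + max(0, −W∥)²). Define the glide-slope function f_g(V) = K_SR·(V⁴ + V₀⁴) / ( V·(√(V² − W⊥²) + W∥) ) for V ∈ (V_b, ∞). Then f_g is differentiable on (V_b, ∞), and for every V ∈ (V_b, ∞), f_g′(V) = 0 holds if and only if V satisfies the speed-to-fly equation V⁶ − (3/2)·V⁴·W⊥² + (1/2)·W∥·√(V² − W⊥²)·(3V⁴ − V₀⁴) − V²·V₀⁴ + (1/2)·W⊥²·V₀⁴ = 0. -/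
/-- The glide-slope function `f_g(V) = K_SR·(V⁴ + V₀⁴)/(V·(√(V² − W⊥²) + W∥))` is
differentiable on `(V_b, ∞)`, with `V_b = √(W⊥² + max(0, −W∥)²)`, and its
derivative vanishes at `V ∈ (V_b, ∞)` iff `V` satisfies the speed-to-fly
equation. -/
theorem glideSlope_deriv_zero_iff_speed_to_fly
    (K_SR V₀ Wpar Wperp : ℝ) (hK : 0 < K_SR) (hV₀ : 0 < V₀)
    (Vb : ℝ) (hVb : Vb = Real.sqrt (Wperp ^ 2 + (max 0 (-Wpar)) ^ 2))
    (fg : ℝ → ℝ)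
    (hfg : ∀ V, fg V = K_SR * (V ^ 4 + V₀ ^ 4) /
        (V * (Real.sqrt (V ^ 2 - Wperp ^ 2) + Wpar))) :
    DifferentiableOn ℝ fg (Set.Ioi Vb) ∧
    ∀ V ∈ Set.Ioi Vb, (deriv fg V = 0 ↔
      V ^ 6 - (3 / 2) * V ^ 4 * Wperp ^ 2
        + (1 / 2) * Wpar * Real.sqrt (V ^ 2 - Wperp ^ 2) * (3 * V ^ 4 - V₀ ^ 4)
        - V ^ 2 * V₀ ^ 4 + (1 / 2) * Wperp ^ 2 * V₀ ^ 4 = 0) := by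
  have hfg' : fg = fun x => K_SR * (x ^ 4 + V₀ ^ 4) /
      (x * (Real.sqrt (x ^ 2 - Wperp ^ 2) + Wpar)) := funext hfg
  have main : ∀ V ∈ Set.Ioi Vb,
      HasDerivAt fg ((K_SR * (4 * V ^ 3) * (V * (Real.sqrt (V ^ 2 - Wperp ^ 2) + Wpar))
        - K_SR * (V ^ 4 + V₀ ^ 4) * ((Real.sqrt (V ^ 2 - Wperp ^ 2) + Wpar)
           + V * (V / Real.sqrt (V ^ 2 - Wperp ^ 2)))) /
        (V * (Real.sqrt (V ^ 2 - Wperp ^ 2) + Wpar)) ^ 2) V ∧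
      0 < V ∧ Wperp ^ 2 < V ^ 2 ∧ 0 < Real.sqrt (V ^ 2 - Wperp ^ 2) + Wpar := by
    intro V hV
    have hV' : Vb < V := hV
    have hVpos : 0 < V := lt_of_le_of_lt (hVb ▸ Real.sqrt_nonneg _) hV'
    have hlt : Wperp ^ 2 + (max 0 (-Wpar)) ^ 2 < V ^ 2 := by
      have h1 : Real.sqrt (Wperp ^ 2 + (max 0 (-Wpar)) ^ 2) < V := hVb ▸ hV'
      exact (Real.sqrt_lt' hVpos).1 h1
    have hm : 0 ≤ max 0 (-Wpar) := le_max_left _ _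
    have hWlt : Wperp ^ 2 < V ^ 2 := by nlinarith [sq_nonneg (max 0 (-Wpar))]
    have hs2 : (Real.sqrt (V ^ 2 - Wperp ^ 2)) ^ 2 = V ^ 2 - Wperp ^ 2 :=
      Real.sq_sqrt (by linarith)
    have hspos : 0 < Real.sqrt (V ^ 2 - Wperp ^ 2) := Real.sqrt_pos.2 (by linarith)
    have hsm : max 0 (-Wpar) < Real.sqrt (V ^ 2 - Wperp ^ 2) := by
      nlinarith [Real.sqrt_nonneg (V ^ 2 - Wperp ^ 2)]
    have hden : 0 < Real.sqrt (V ^ 2 - Wperp ^ 2) + Wpar := by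
      have := le_max_right 0 (-Wpar); linarith
    refine ⟨?_, hVpos, hWlt, hden⟩
    have hne : V ^ 2 - Wperp ^ 2 ≠ 0 := ne_of_gt (by linarith)
    have hu : HasDerivAt (fun x : ℝ => x ^ 2 - Wperp ^ 2) (2 * V) V := by
      simpa using (hasDerivAt_pow 2 V).sub_const (Wperp ^ 2)
    have hsq : HasDerivAt (fun x : ℝ => Real.sqrt (x ^ 2 - Wperp ^ 2))
        (1 / (2 * Real.sqrt (V ^ 2 - Wperp ^ 2)) * (2 * V)) V :=
      (Real.hasDerivAt_sqrt hne).comp V hu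
    have hdenF : HasDerivAt (fun x : ℝ => x * (Real.sqrt (x ^ 2 - Wperp ^ 2) + Wpar))
        (1 * (Real.sqrt (V ^ 2 - Wperp ^ 2) + Wpar)
          + V * (1 / (2 * Real.sqrt (V ^ 2 - Wperp ^ 2)) * (2 * V))) V :=
      (hasDerivAt_id V).mul (hsq.add_const Wpar)
    have hnum : HasDerivAt (fun x : ℝ => K_SR * (x ^ 4 + V₀ ^ 4)) (K_SR * (4 * V ^ 3)) V := by
      simpa using ((hasDerivAt_pow 4 V).add_const (V₀ ^ 4)).const_mul K_SR
    have hDne : V * (Real.sqrt (V ^ 2 - Wperp ^ 2) + Wpar) ≠ 0 := by positivity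
    have hdiv := hnum.div hdenF hDne
    rw [hfg']
    have hdiv' : HasDerivAt (fun x => K_SR * (x ^ 4 + V₀ ^ 4) /
        (x * (Real.sqrt (x ^ 2 - Wperp ^ 2) + Wpar))) _ V := hdiv
    convert hdiv' using 2
    have hsne : Real.sqrt (V ^ 2 - Wperp ^ 2) ≠ 0 := ne_of_gt hspos
    field_simp
  refine ⟨fun V hV => ((main V hV).1).differentiableAt.differentiableWithinAt, ?_⟩
  intro V hV
  obtain ⟨hd, hVpos, hWlt, hden⟩ := main V hV
  have hs2 : (Real.sqrt (V ^ 2 - Wperp ^ 2)) ^ 2 = V ^ 2 - Wperp ^ 2 :=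
    Real.sq_sqrt (by linarith)
  have hspos : 0 < Real.sqrt (V ^ 2 - Wperp ^ 2) := Real.sqrt_pos.2 (by linarith)
  have hsne : Real.sqrt (V ^ 2 - Wperp ^ 2) ≠ 0 := ne_of_gt hspos
  set s := Real.sqrt (V ^ 2 - Wperp ^ 2) with hs
  rw [hd.deriv, div_eq_zero_iff]
  have hD2 : (V * (s + Wpar)) ^ 2 ≠ 0 := by positivity
  constructor
  · rintro (h | h)
    · field_simp at h
      have h2 : 2 * K_SR * (V ^ 6 - 3 / 2 * V ^ 4 * Wperp ^ 2
          + 1 / 2 * Wpar * s * (3 * V ^ 4 - V₀ ^ 4) - V ^ 2 * V₀ ^ 4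
          + 1 / 2 * Wperp ^ 2 * V₀ ^ 4) = 0 := by
        linear_combination h + K_SR * (V₀ ^ 4 - 3 * V ^ 4) * hs2
      have h3 : (2 : ℝ) * K_SR ≠ 0 := by positivity
      exact (mul_eq_zero.mp h2).resolve_left h3
    · exact absurd h hD2
  · intro h
    left
    field_simp
    linear_combination (2 * K_SR) * h + K_SR * (3 * V ^ 4 - V₀ ^ 4) * hs2
end

section
/- Let K_SR > 0, V₀ > 0 and W∥, W⊥ ∈ ℝ with W∥ ≤ 0, and set V_b = √(W⊥² + W∥²). Define f_g(V) = K_SR·(V⁴ + V₀⁴) / ( V·(√(V² − W⊥²) + W∥) ) on (V_b, ∞). Then f_g(V) → +∞ as V → V_b⁺, f_g(V) → +∞ as V → ∞, and f_g attains a global minimum on (V_b, ∞); moreover the global minimizer is the unique V ∈ (V_b, ∞) satisfying the speed-to-fly equation V⁶ − (3/2)·V⁴·W⊥² + (1/2)·W∥·√(V² − W⊥²)·(3V⁴ − V₀⁴) − V²·V₀⁴ + (1/2)·W⊥²·V₀⁴ = 0. -/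
lemma gsa_facts (Wpar Wperp : ℝ) {Vb V : ℝ}
    (hVb : Vb = Real.sqrt (Wperp ^ 2 + Wpar ^ 2)) (hV : Vb < V) :
    0 < V ∧ 0 < Real.sqrt (V ^ 2 - Wperp ^ 2) ∧
      (Real.sqrt (V ^ 2 - Wperp ^ 2)) ^ 2 = V ^ 2 - Wperp ^ 2 ∧
      -Wpar < Real.sqrt (V ^ 2 - Wperp ^ 2) := by
  have hVb0 : 0 ≤ Vb := hVb ▸ Real.sqrt_nonneg _
  have hVpos : 0 < V := lt_of_le_of_lt hVb0 hV
  have hVb2 : Vb ^ 2 = Wperp ^ 2 + Wpar ^ 2 := by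
    rw [hVb]; exact Real.sq_sqrt (by positivity)
  have hV2 : Wperp ^ 2 + Wpar ^ 2 < V ^ 2 := by
    rw [← hVb2]; exact pow_lt_pow_left₀ hV hVb0 two_ne_zero
  have hpos : 0 < V ^ 2 - Wperp ^ 2 := by nlinarith
  have hs2 : (Real.sqrt (V ^ 2 - Wperp ^ 2)) ^ 2 = V ^ 2 - Wperp ^ 2 :=
    Real.sq_sqrt hpos.le
  have hspos : 0 < Real.sqrt (V ^ 2 - Wperp ^ 2) := Real.sqrt_pos.mpr hpos
  refine ⟨hVpos, hspos, hs2, ?_⟩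
  have h1 : (-Wpar) ^ 2 < (Real.sqrt (V ^ 2 - Wperp ^ 2)) ^ 2 := by
    rw [hs2]; nlinarith
  exact lt_of_pow_lt_pow_left₀ 2 hspos.le h1

lemma gsa_Bpos {s w p : ℝ} (hw : 0 ≤ w) (hws : w < s) (hp : 0 ≤ p) :
    0 < 8*s^5 - 19*w*s^4 + 12*w^2*s^3 - 2*p*s^3 + 4*p*w*s^2 + 2*p^2*s - p^2*w := by
  have hs : 0 < s := lt_of_le_of_lt hw hws
  have h2sw : 0 < 2*s - w := by linarith
  have key : 0 < (8*s^5 - 19*w*s^4 + 12*w^2*s^3 - 2*p*s^3 + 4*p*w*s^2 + 2*p^2*s - p^2*w) * (2*s - w) := by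
    have h1 : 0 ≤ ((2*s - w)*p - s^2*(s - 2*w))^2 := sq_nonneg _
    have h2 : 0 < 3*s^3*(s - w)^2*(5*s - 4*w) := by
      have hsw2 : 0 < (s - w)^2 := by nlinarith
      have h5 : 0 < 5*s - 4*w := by linarith
      have h3 : 0 < 3*s^3 := by positivity
      calc (0:ℝ) < (3*s^3*(s-w)^2)*(5*s-4*w) := mul_pos (mul_pos h3 hsw2) h5
        _ = 3*s^3*(s - w)^2*(5*s - 4*w) := by ring
    nlinarith [h1, h2]
  nlinarith [key, h2sw]

lemma gsa_Qderiv_pos (V₀ Wpar Wperp : ℝ) (hV₀ : 0 < V₀) (hWpar : Wpar ≤ 0)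
    {V s : ℝ} (hV : 0 < V) (hs : 0 < s) (hs2 : s ^ 2 = V ^ 2 - Wperp ^ 2)
    (hsw : -Wpar < s) :
    0 < 12*V^3 - ((4*V^3*V^2 + (V^4+V₀^4)*(2*V))*(V^2 - Wperp^2 + Wpar*s)
        - (V^4+V₀^4)*V^2*(2*V + Wpar*(V/s))) / (V^2 - Wperp^2 + Wpar*s)^2 := by
  rw [← hs2]
  have hu : 0 < s^2 + Wpar*s := by nlinarith
  have hp : 0 ≤ V^2 - s^2 := by nlinarith [sq_nonneg Wperp]
  have hB := gsa_Bpos (w := -Wpar) (p := V^2 - s^2) (by linarith) hsw hp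
  have hkey : 0 < (12*V^3*(s^2+Wpar*s)^2 - ((4*V^3*V^2 + (V^4+V₀^4)*(2*V))*(s^2 + Wpar*s)
      - (V^4+V₀^4)*V^2*(2*V + Wpar*(V/s)))) * s := by
    have heq : (12*V^3*(s^2+Wpar*s)^2 - ((4*V^3*V^2 + (V^4+V₀^4)*(2*V))*(s^2 + Wpar*s)
        - (V^4+V₀^4)*V^2*(2*V + Wpar*(V/s)))) * s
        = V^3*(8*s^5 - 19*(-Wpar)*s^4 + 12*(-Wpar)^2*s^3 - 2*(V^2-s^2)*s^3
            + 4*(V^2-s^2)*(-Wpar)*s^2 + 2*(V^2-s^2)^2*s - (V^2-s^2)^2*(-Wpar))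
          + V₀^4*V*(s^2*(-Wpar) + (V^2-s^2)*(2*s-(-Wpar))) := by
      field_simp
      ring
    rw [heq]
    have h2 : 0 ≤ V₀^4*V*(s^2*(-Wpar) + (V^2-s^2)*(2*s-(-Wpar))) := by
      apply mul_nonneg (by positivity)
      apply add_nonneg (mul_nonneg (sq_nonneg s) (by linarith))
      exact mul_nonneg hp (by linarith)
    nlinarith [mul_pos (pow_pos hV 3) hB, h2]
  have hnum : 0 < 12*V^3*(s^2+Wpar*s)^2 - ((4*V^3*V^2 + (V^4+V₀^4)*(2*V))*(s^2 + Wpar*s)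
      - (V^4+V₀^4)*V^2*(2*V + Wpar*(V/s))) := by nlinarith [hkey, hs]
  have hu2 : 0 < (s^2 + Wpar*s)^2 := by positivity
  rw [sub_pos, div_lt_iff₀ hu2]
  nlinarith [hnum]

lemma gsa_hasDerivAt_s (Wperp : ℝ) {V : ℝ} (h : 0 < V ^ 2 - Wperp ^ 2) :
    HasDerivAt (fun V => Real.sqrt (V ^ 2 - Wperp ^ 2))
      (V / Real.sqrt (V ^ 2 - Wperp ^ 2)) V := by
  have h2 : HasDerivAt (fun V : ℝ => V ^ 2 - Wperp ^ 2) (2 * V) V := by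
    simpa using (hasDerivAt_pow 2 V).sub_const (Wperp ^ 2)
  have h1 := (Real.hasDerivAt_sqrt (ne_of_gt h)).comp V h2
  refine h1.congr_deriv ?_
  have hs : Real.sqrt (V ^ 2 - Wperp ^ 2) ≠ 0 := (Real.sqrt_pos.mpr h).ne'
  field_simp

lemma gsa_hasDerivAt_Q (V₀ Wpar Wperp : ℝ) {V : ℝ} (h : 0 < V ^ 2 - Wperp ^ 2)
    (hu : V ^ 2 - Wperp ^ 2 + Wpar * Real.sqrt (V ^ 2 - Wperp ^ 2) ≠ 0) :
    HasDerivAt (fun V => 3*V^4 - V₀^4 -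
        ((V^4+V₀^4)*V^2) / (V^2 - Wperp^2 + Wpar * Real.sqrt (V^2 - Wperp^2)))
      (12*V^3 - ((4*V^3*V^2 + (V^4+V₀^4)*(2*V))*(V^2 - Wperp^2 + Wpar*Real.sqrt (V^2 - Wperp^2))
          - (V^4+V₀^4)*V^2*(2*V + Wpar*(V/Real.sqrt (V^2 - Wperp^2))))
        / (V^2 - Wperp^2 + Wpar*Real.sqrt (V^2 - Wperp^2))^2) V := by
  have hn : HasDerivAt (fun V : ℝ => (V^4+V₀^4)*V^2) (4*V^3*V^2 + (V^4+V₀^4)*(2*V)) V := by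
    have := ((hasDerivAt_pow 4 V).add_const (V₀^4)).mul (hasDerivAt_pow 2 V)
    refine this.congr_deriv ?_
    norm_num
  have hu' : HasDerivAt (fun V : ℝ => V^2 - Wperp^2 + Wpar * Real.sqrt (V^2 - Wperp^2))
      (2*V + Wpar*(V/Real.sqrt (V^2 - Wperp^2))) V := by
    have h2 : HasDerivAt (fun V : ℝ => V ^ 2 - Wperp ^ 2) (2 * V) V := by
      simpa using (hasDerivAt_pow 2 V).sub_const (Wperp ^ 2)
    exact h2.add ((gsa_hasDerivAt_s Wperp h).const_mul Wpar)
  have hmain : HasDerivAt (fun V : ℝ => 3*V^4 - V₀^4) (12*V^3) V := by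
    have := ((hasDerivAt_pow 4 V).const_mul 3).sub_const (V₀^4)
    refine this.congr_deriv ?_
    norm_num
    ring
  exact hmain.sub (hn.div hu' hu)

lemma gsa_hasDerivAt_F (K V₀ Wpar Wperp : ℝ) {V : ℝ} (h : 0 < V ^ 2 - Wperp ^ 2)
    (hd : V * (Real.sqrt (V ^ 2 - Wperp ^ 2) + Wpar) ≠ 0) :
    HasDerivAt (fun V => K * (V ^ 4 + V₀ ^ 4) /
        (V * (Real.sqrt (V ^ 2 - Wperp ^ 2) + Wpar)))
      ((K * (4*V^3) * (V * (Real.sqrt (V ^ 2 - Wperp ^ 2) + Wpar))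
        - K * (V ^ 4 + V₀ ^ 4) * (1 * (Real.sqrt (V ^ 2 - Wperp ^ 2) + Wpar)
            + V * (V / Real.sqrt (V ^ 2 - Wperp ^ 2))))
        / (V * (Real.sqrt (V ^ 2 - Wperp ^ 2) + Wpar)) ^ 2) V := by
  have hN : HasDerivAt (fun V : ℝ => K * (V ^ 4 + V₀ ^ 4)) (K * (4*V^3)) V := by
    have := ((hasDerivAt_pow 4 V).add_const (V₀ ^ 4)).const_mul K
    refine this.congr_deriv ?_
    norm_num
  have hD : HasDerivAt (fun V : ℝ => V * (Real.sqrt (V ^ 2 - Wperp ^ 2) + Wpar))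
      (1 * (Real.sqrt (V ^ 2 - Wperp ^ 2) + Wpar) + V * (V / Real.sqrt (V ^ 2 - Wperp ^ 2))) V :=
    (hasDerivAt_id V).mul ((gsa_hasDerivAt_s Wperp h).add_const Wpar)
  exact hN.div hD hd

open Filter Set in
set_option maxHeartbeats 1600000 in
/-- For headwind or no tailwind (`W∥ ≤ 0`), the glide-slope function
`f_g(V) = K_SR·(V⁴ + V₀⁴)/(V·(√(V² − W⊥²) + W∥))` tends to `+∞` as `V → V_b⁺`
and as `V → ∞` (where `V_b = √(W⊥² + W∥²)`), attains a global minimum on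
`(V_b, ∞)`, and the global minimizer is the unique `V ∈ (V_b, ∞)` satisfying the
speed-to-fly equation. -/
theorem glideSlope_global_min_headwind
    (K_SR V₀ Wpar Wperp : ℝ) (hK : 0 < K_SR) (hV₀ : 0 < V₀) (hWpar : Wpar ≤ 0)
    (Vb : ℝ) (hVb : Vb = Real.sqrt (Wperp ^ 2 + Wpar ^ 2))
    (fg : ℝ → ℝ)
    (hfg : ∀ V, fg V = K_SR * (V ^ 4 + V₀ ^ 4) /
        (V * (Real.sqrt (V ^ 2 - Wperp ^ 2) + Wpar))) :
    Filter.Tendsto fg (nhdsWithin Vb (Set.Ioi Vb)) Filter.atTop ∧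
    Filter.Tendsto fg Filter.atTop Filter.atTop ∧
    ∃ Vm ∈ Set.Ioi Vb,
      (∀ V ∈ Set.Ioi Vb, fg Vm ≤ fg V) ∧
      (Vm ^ 6 - (3 / 2) * Vm ^ 4 * Wperp ^ 2
        + (1 / 2) * Wpar * Real.sqrt (Vm ^ 2 - Wperp ^ 2) * (3 * Vm ^ 4 - V₀ ^ 4)
        - Vm ^ 2 * V₀ ^ 4 + (1 / 2) * Wperp ^ 2 * V₀ ^ 4 = 0) ∧
      (∀ V ∈ Set.Ioi Vb,
        V ^ 6 - (3 / 2) * V ^ 4 * Wperp ^ 2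
          + (1 / 2) * Wpar * Real.sqrt (V ^ 2 - Wperp ^ 2) * (3 * V ^ 4 - V₀ ^ 4)
          - V ^ 2 * V₀ ^ 4 + (1 / 2) * Wperp ^ 2 * V₀ ^ 4 = 0 → V = Vm) := by
  have hfg' : fg = fun V => K_SR * (V ^ 4 + V₀ ^ 4) /
      (V * (Real.sqrt (V ^ 2 - Wperp ^ 2) + Wpar)) := funext hfg
  have hVb0 : 0 ≤ Vb := hVb ▸ Real.sqrt_nonneg _
  have hVb2 : Vb ^ 2 = Wperp ^ 2 + Wpar ^ 2 := by
    rw [hVb]; exact Real.sq_sqrt (by positivity)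
  have hdpos : ∀ V ∈ Set.Ioi Vb, 0 < V * (Real.sqrt (V ^ 2 - Wperp ^ 2) + Wpar) := by
    intro V hV
    obtain ⟨h1, h2, h3, h4⟩ := gsa_facts Wpar Wperp hVb hV
    exact mul_pos h1 (by linarith)
  have hdcont : Continuous fun V : ℝ => V * (Real.sqrt (V ^ 2 - Wperp ^ 2) + Wpar) :=
    continuous_id.mul ((Real.continuous_sqrt.comp (by continuity)).add continuous_const)
  have hdVb : Vb * (Real.sqrt (Vb ^ 2 - Wperp ^ 2) + Wpar) = 0 := by
    have h1 : Vb ^ 2 - Wperp ^ 2 = Wpar ^ 2 := by linarith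
    rw [h1, Real.sqrt_sq_eq_abs, abs_of_nonpos hWpar]; ring
  have limA : Tendsto fg (nhdsWithin Vb (Set.Ioi Vb)) atTop := by
    rw [hfg']
    have hN : Tendsto (fun V : ℝ => K_SR * (V ^ 4 + V₀ ^ 4)) (nhdsWithin Vb (Set.Ioi Vb))
        (nhds (K_SR * (Vb ^ 4 + V₀ ^ 4))) :=
      ((continuous_const.mul ((continuous_pow 4).add continuous_const)).tendsto Vb).mono_left
        nhdsWithin_le_nhds
    have hcpos : 0 < K_SR * (Vb ^ 4 + V₀ ^ 4) := mul_pos hK (by positivity)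
    have hdT : Tendsto (fun V : ℝ => V * (Real.sqrt (V ^ 2 - Wperp ^ 2) + Wpar))
        (nhdsWithin Vb (Set.Ioi Vb)) (nhdsWithin 0 (Set.Ioi 0)) := by
      rw [tendsto_nhdsWithin_iff]
      constructor
      · have := (hdcont.tendsto Vb).mono_left (nhdsWithin_le_nhds (s := Set.Ioi Vb))
        rwa [hdVb] at this
      · filter_upwards [self_mem_nhdsWithin] with V hV
        exact hdpos V hV
    have hinv := tendsto_inv_nhdsGT_zero.comp hdT
    simp only [div_eq_mul_inv]
    exact Filter.Tendsto.pos_mul_atTop hcpos hN hinv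
  have limB : Tendsto fg atTop atTop := by
    have h2 : Tendsto (fun V : ℝ => K_SR * V ^ 2) atTop atTop :=
      (tendsto_pow_atTop two_ne_zero).const_mul_atTop hK
    apply tendsto_atTop_mono' atTop ?_ h2
    filter_upwards [eventually_gt_atTop Vb] with V hV
    obtain ⟨h1, hsp, hs2, h4⟩ := gsa_facts Wpar Wperp hVb hV
    have hd := hdpos V hV
    have hsleV : Real.sqrt (V ^ 2 - Wperp ^ 2) ≤ V := by
      nlinarith [hs2, sq_nonneg Wperp]
    rw [hfg V, le_div_iff₀ hd]
    have key : K_SR * V ^ 3 * (Real.sqrt (V ^ 2 - Wperp ^ 2) + Wpar) ≤ K_SR * V ^ 3 * V :=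
      mul_le_mul_of_nonneg_left (by linarith) (mul_nonneg hK.le (pow_nonneg h1.le 3))
    nlinarith [key, mul_pos hK (pow_pos hV₀ 4)]
  refine ⟨limA, limB, ?_⟩
  -- existence of the global minimizer
  have hcont : ContinuousOn fg (Set.Ioi Vb) := by
    rw [hfg']
    exact ContinuousOn.div
      ((continuous_const.mul ((continuous_pow 4).add continuous_const)).continuousOn)
      hdcont.continuousOn (fun x hx => (hdpos x hx).ne')
  have hV1 : Vb < Vb + 1 := lt_add_one Vb
  have hA := limA.eventually (eventually_ge_atTop (fg (Vb + 1) + 1))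
  rw [(nhdsGT_basis Vb).eventually_iff] at hA
  obtain ⟨a, haVb, hamem⟩ := hA
  obtain ⟨b, hb⟩ := eventually_atTop.mp (limB.eventually (eventually_ge_atTop (fg (Vb + 1) + 1)))
  have hmin' : Vb < min a (Vb + 1) := lt_min haVb hV1
  set α : ℝ := (Vb + min a (Vb + 1)) / 2 with hαdef
  have hα1 : Vb < α := by rw [hαdef]; linarith
  have hα2 : α < min a (Vb + 1) := by rw [hαdef]; linarith
  set β : ℝ := max b (Vb + 1) with hβdef
  have hV1mem : Vb + 1 ∈ Set.Icc α β :=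
    ⟨le_of_lt (lt_of_lt_of_le hα2 (min_le_right _ _)), le_max_right _ _⟩
  have hsub : Set.Icc α β ⊆ Set.Ioi Vb := fun x hx => lt_of_lt_of_le hα1 hx.1
  obtain ⟨Vm, hVmI, hVmmin⟩ := isCompact_Icc.exists_isMinOn ⟨Vb + 1, hV1mem⟩ (hcont.mono hsub)
  have hVmIoi : Vm ∈ Set.Ioi Vb := hsub hVmI
  have hglob : ∀ V ∈ Set.Ioi Vb, fg Vm ≤ fg V := by
    intro V hV
    by_cases hVIcc : V ∈ Set.Icc α β
    · exact hVmmin hVIcc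
    · have hVmV1 : fg Vm ≤ fg (Vb + 1) := hVmmin hV1mem
      rcases not_and_or.mp ((Set.mem_Icc).not.mp hVIcc) with h | h
      · have hVα : V < α := lt_of_not_ge h
        have hVa : V < a := by
          have h1 := min_le_left a (Vb + 1)
          linarith
        have := hamem ⟨hV, hVa⟩
        linarith
      · have hbV : b ≤ V := le_trans (le_max_left b (Vb + 1)) (lt_of_not_ge h).le
        have := hb V hbV
        linarith
  have hEVm : Vm ^ 6 - (3 / 2) * Vm ^ 4 * Wperp ^ 2
      + (1 / 2) * Wpar * Real.sqrt (Vm ^ 2 - Wperp ^ 2) * (3 * Vm ^ 4 - V₀ ^ 4)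
      - Vm ^ 2 * V₀ ^ 4 + (1 / 2) * Wperp ^ 2 * V₀ ^ 4 = 0 := by
    obtain ⟨hVmpos, hsp, hs2, hsw⟩ := gsa_facts Wpar Wperp hVb hVmIoi
    have hdm := hdpos Vm hVmIoi
    have hposm : 0 < Vm ^ 2 - Wperp ^ 2 := by nlinarith [hs2, hsp]
    have hF := gsa_hasDerivAt_F K_SR V₀ Wpar Wperp hposm hdm.ne'
    have hF' : HasDerivAt fg ((K_SR * (4*Vm^3) * (Vm * (Real.sqrt (Vm ^ 2 - Wperp ^ 2) + Wpar))
        - K_SR * (Vm ^ 4 + V₀ ^ 4) * (1 * (Real.sqrt (Vm ^ 2 - Wperp ^ 2) + Wpar)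
            + Vm * (Vm / Real.sqrt (Vm ^ 2 - Wperp ^ 2))))
        / (Vm * (Real.sqrt (Vm ^ 2 - Wperp ^ 2) + Wpar)) ^ 2) Vm := by
      rw [hfg']; exact hF
    have hloc : IsLocalMin fg Vm :=
      Filter.eventually_of_mem (isOpen_Ioi.mem_nhds hVmIoi) (fun V hV => hglob V hV)
    have hzero := hloc.hasDerivAt_eq_zero hF'
    have hnum := (div_eq_zero_iff.mp hzero).resolve_right (pow_ne_zero 2 hdm.ne')
    have h5 : 4*Vm^3*(Vm * (Real.sqrt (Vm ^ 2 - Wperp ^ 2) + Wpar))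
        - (Vm ^ 4 + V₀ ^ 4) * (1 * (Real.sqrt (Vm ^ 2 - Wperp ^ 2) + Wpar)
            + Vm * (Vm / Real.sqrt (Vm ^ 2 - Wperp ^ 2))) = 0 := by
      have h6 : K_SR * (4*Vm^3*(Vm * (Real.sqrt (Vm ^ 2 - Wperp ^ 2) + Wpar))
          - (Vm ^ 4 + V₀ ^ 4) * (1 * (Real.sqrt (Vm ^ 2 - Wperp ^ 2) + Wpar)
              + Vm * (Vm / Real.sqrt (Vm ^ 2 - Wperp ^ 2)))) = 0 := by
        linear_combination hnum
      exact (mul_eq_zero.mp h6).resolve_left hK.ne'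
    field_simp [hsp.ne'] at h5
    linear_combination (1/2) * h5 - ((3*Vm^4 - V₀^4)/2) * hs2
  refine ⟨Vm, hVmIoi, hglob, hEVm, ?_⟩
  -- uniqueness
  have hupos : ∀ V ∈ Set.Ioi Vb,
      0 < V ^ 2 - Wperp ^ 2 + Wpar * Real.sqrt (V ^ 2 - Wperp ^ 2) := by
    intro V hV
    obtain ⟨h1, hsp, hs2, hsw⟩ := gsa_facts Wpar Wperp hVb hV
    nlinarith [mul_pos hsp (show 0 < Real.sqrt (V ^ 2 - Wperp ^ 2) + Wpar by linarith), hs2]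
  have hQmono : StrictMonoOn (fun V : ℝ => 3*V^4 - V₀^4 -
      ((V^4+V₀^4)*V^2) / (V^2 - Wperp^2 + Wpar * Real.sqrt (V^2 - Wperp^2))) (Set.Ioi Vb) := by
    apply strictMonoOn_of_deriv_pos (convex_Ioi Vb)
    · apply ContinuousOn.sub
      · exact ((continuous_const.mul (continuous_pow 4)).sub continuous_const).continuousOn
      · apply ContinuousOn.div
        · exact (((continuous_pow 4).add continuous_const).mul (continuous_pow 2)).continuousOn
        · exact (((continuous_pow 2).sub continuous_const).add
            (continuous_const.mul (Real.continuous_sqrt.comp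
              ((continuous_pow 2).sub continuous_const)))).continuousOn
        · exact fun x hx => (hupos x hx).ne'
    · intro x hx
      rw [interior_Ioi] at hx
      obtain ⟨h1, hsp, hs2x, hswx⟩ := gsa_facts Wpar Wperp hVb hx
      have hpx : 0 < x ^ 2 - Wperp ^ 2 := by nlinarith [hs2x, hsp]
      have hux := hupos x hx
      rw [(gsa_hasDerivAt_Q V₀ Wpar Wperp hpx hux.ne').deriv]
      exact gsa_Qderiv_pos V₀ Wpar Wperp hV₀ hWpar h1 hsp hs2x hswx
  have hQzero : ∀ V ∈ Set.Ioi Vb,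
      (V ^ 6 - (3 / 2) * V ^ 4 * Wperp ^ 2
        + (1 / 2) * Wpar * Real.sqrt (V ^ 2 - Wperp ^ 2) * (3 * V ^ 4 - V₀ ^ 4)
        - V ^ 2 * V₀ ^ 4 + (1 / 2) * Wperp ^ 2 * V₀ ^ 4 = 0) →
      3*V^4 - V₀^4 - ((V^4+V₀^4)*V^2) / (V^2 - Wperp^2 + Wpar * Real.sqrt (V^2 - Wperp^2)) = 0 := by
    intro V hV hE
    obtain ⟨h1, hsp, hs2x, hswx⟩ := gsa_facts Wpar Wperp hVb hV
    have hux := hupos V hV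
    have hq : (3*V^4 - V₀^4 - ((V^4+V₀^4)*V^2)
          / (V^2 - Wperp^2 + Wpar * Real.sqrt (V^2 - Wperp^2)))
        * (V^2 - Wperp^2 + Wpar * Real.sqrt (V^2 - Wperp^2))
        = 2 * (V ^ 6 - (3 / 2) * V ^ 4 * Wperp ^ 2
          + (1 / 2) * Wpar * Real.sqrt (V ^ 2 - Wperp ^ 2) * (3 * V ^ 4 - V₀ ^ 4)
          - V ^ 2 * V₀ ^ 4 + (1 / 2) * Wperp ^ 2 * V₀ ^ 4) := by
      field_simp
      ring
    rw [hE, mul_zero] at hq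
    exact (mul_eq_zero.mp hq).resolve_right hux.ne'
  intro V hV hE
  have hQV := hQzero V hV hE
  have hQVm := hQzero Vm hVmIoi hEVm
  exact hQmono.injOn hV hVmIoi (hQV.trans hQVm.symm)
end

section
/- Let K_SR > 0, V₀ > 0, V > 0, g > 0 and φ ∈ (0, π/2) be constants. Suppose Z, ψ : ℝ → ℝ are differentiable with constant rates Z′(t) = K_SR·(V⁴ + V₀⁴/cos²φ)/V (the sink rate at load factor n(φ) = 1/cos φ) and ψ′(t) = (g/V)·tan φ. Then for all t₀ ≤ t₁, the altitude loss during the turn satisfies Z(t₁) − Z(t₀) = (2·K_SR/g)·((V⁴·cos²φ + V₀⁴)/sin(2φ))·(ψ(t₁) − ψ(t₀)); i.e., dZ/dψ = (2·K_SR/g)·(V⁴·cos²φ + V₀⁴)/sin(2φ). -/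
lemma linear_of_const_deriv (f : ℝ → ℝ) (c : ℝ) (hf : ∀ t, HasDerivAt f c t) :
    ∀ a b : ℝ, f b - f a = c * (b - a) := by
  intro a b
  have h : ∀ t, HasDerivAt (fun t => f t - c * t) 0 t := by
    intro t
    have := (hf t).sub ((hasDerivAt_id t).const_mul c)
    rw [show (0:ℝ) = c - c * 1 by ring]
    exact this
  have hconst : (fun t => f t - c * t) b = (fun t => f t - c * t) a := by
    have := is_const_of_deriv_eq_zero (f := fun t => f t - c * t)
      (fun t => (h t).differentiableAt) (fun t => (h t).deriv) b a
    simpa using this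
  simp only at hconst
  linarith [hconst]

/-- During a constant-bank-angle turn at bank angle `φ` and constant airspeed
`V`, with sink rate `K_SR·(V⁴ + V₀⁴/cos²φ)/V` and heading rate `(g/V)·tan φ`,
the altitude loss is `(2·K_SR/g)·((V⁴·cos²φ + V₀⁴)/sin(2φ))` per radian of
heading change. -/
theorem altitude_loss_per_heading_change
    (K_SR V₀ V g φ : ℝ)
    (hK : 0 < K_SR) (hV₀ : 0 < V₀) (hV : 0 < V) (hg : 0 < g)
    (hφ : φ ∈ Set.Ioo 0 (Real.pi / 2))
    (Z ψ : ℝ → ℝ)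
    (hZ : ∀ t, HasDerivAt Z (K_SR * (V ^ 4 + V₀ ^ 4 / (Real.cos φ) ^ 2) / V) t)
    (hψ : ∀ t, HasDerivAt ψ (g / V * Real.tan φ) t) :
    ∀ t₀ t₁ : ℝ, t₀ ≤ t₁ →
      Z t₁ - Z t₀ = (2 * K_SR / g) * ((V ^ 4 * (Real.cos φ) ^ 2 + V₀ ^ 4) / Real.sin (2 * φ))
        * (ψ t₁ - ψ t₀) := by
  intro t₀ t₁ _
  obtain ⟨hφ0, hφ1⟩ := hφ
  have hs : 0 < Real.sin φ := Real.sin_pos_of_pos_of_lt_pi hφ0 (lt_trans hφ1 (by linarith [Real.pi_pos]))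
  have hc : 0 < Real.cos φ := Real.cos_pos_of_mem_Ioo ⟨by linarith [Real.pi_pos], hφ1⟩
  have hZd := linear_of_const_deriv Z _ hZ t₀ t₁
  have hψd := linear_of_const_deriv ψ _ hψ t₀ t₁
  rw [hZd, hψd, Real.sin_two_mul, Real.tan_eq_sin_div_cos]
  field_simp
end

section
/- Let V_s > 0 (the wings-level stall speed V_stall(1)) and V₀ > 0. Consider the per-radian turn altitude loss F(V, φ) = (V⁴·cos²φ + V₀⁴)/sin(2φ) over the feasible set { (V, φ) : φ ∈ (0, π/2), V ≥ V_s/√(cos φ) } (the constraint V ≥ V_stall(n(φ)) = V_s/√(cos φ) is the stall limit at load factor n(φ) = 1/cos φ). Then F(V, φ) ≥ V_s⁴ + V₀⁴ for all feasible (V, φ), with equality if and only if φ = π/4 and V = V_s/√(cos(π/4)) = 2^{1/4}·V_s. Hence the altitude-loss-optimal turn is flown at the stall limit with bank angle π/4, and the minimal altitude loss per radian of heading change is (2·K_SR/g)·(V_s⁴ + V₀⁴) for sink-rate constant K_SR > 0 and gravity g > 0. -/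
open Real

lemma two_pow_quarter_pow : ((2:ℝ) ^ ((1:ℝ)/4)) ^ 4 = 2 := by
  rw [← Real.rpow_natCast ((2:ℝ) ^ ((1:ℝ)/4)) 4, ← Real.rpow_mul (by norm_num)]
  norm_num

lemma sqrt_cos_pi_div_four : Real.sqrt (Real.cos (π/4)) = ((2:ℝ) ^ ((1:ℝ)/4))⁻¹ := by
  have ha : ((2:ℝ) ^ ((1:ℝ)/4)) ^ 2 = Real.sqrt 2 := by
    rw [← Real.rpow_natCast ((2:ℝ) ^ ((1:ℝ)/4)) 2, ← Real.rpow_mul (by norm_num),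
      Real.sqrt_eq_rpow]
    norm_num
  have h2 : Real.cos (π/4) = (((2:ℝ) ^ ((1:ℝ)/4))⁻¹) ^ 2 := by
    rw [Real.cos_pi_div_four, inv_pow, ha, eq_comm, inv_eq_iff_eq_inv, eq_comm,
      inv_div, div_eq_iff (by positivity)]
    exact (Real.mul_self_sqrt (by norm_num)).symm
  rw [h2, Real.sqrt_sq (by positivity)]

lemma key_lower (Vs V₀ : ℝ) (hVs : 0 < Vs) (V φ : ℝ) (hφ : φ ∈ Set.Ioo 0 (π/2))
    (hV : Vs / Real.sqrt (Real.cos φ) ≤ V) :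
    Vs ^ 4 + V₀ ^ 4 ≤ (V ^ 4 * (Real.cos φ) ^ 2 + V₀ ^ 4) / Real.sin (2 * φ) := by
  obtain ⟨h0, h2⟩ := hφ
  have hc : 0 < Real.cos φ := Real.cos_pos_of_mem_Ioo ⟨by linarith [Real.pi_pos], h2⟩
  have hs : 0 < Real.sin (2 * φ) := Real.sin_pos_of_pos_of_lt_pi (by linarith) (by linarith)
  have hsc : Real.sqrt (Real.cos φ) > 0 := Real.sqrt_pos.mpr hc
  have hV0 : 0 < V := lt_of_lt_of_le (by positivity) hV
  have hV4 : Vs ^ 4 ≤ V ^ 4 * (Real.cos φ) ^ 2 := by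
    have h1 : (Vs / Real.sqrt (Real.cos φ)) ^ 4 ≤ V ^ 4 :=
      pow_le_pow_left₀ (by positivity) hV 4
    have h2' : (Vs / Real.sqrt (Real.cos φ)) ^ 4 = Vs ^ 4 / (Real.cos φ) ^ 2 := by
      rw [div_pow, show (Real.sqrt (Real.cos φ)) ^ 4 = ((Real.sqrt (Real.cos φ))^2)^2 by ring,
        Real.sq_sqrt hc.le]
    rw [h2'] at h1
    calc Vs ^ 4 = Vs ^ 4 / (Real.cos φ) ^ 2 * (Real.cos φ) ^ 2 := by field_simp
    _ ≤ V ^ 4 * (Real.cos φ) ^ 2 := by nlinarith [sq_nonneg (Real.cos φ)]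
  rw [le_div_iff₀ hs]
  have hA : (0:ℝ) ≤ Vs ^ 4 + V₀ ^ 4 := by positivity
  calc (Vs ^ 4 + V₀ ^ 4) * Real.sin (2*φ) ≤ (Vs ^ 4 + V₀ ^ 4) * 1 :=
        mul_le_mul_of_nonneg_left (Real.sin_le_one _) hA
    _ ≤ V ^ 4 * (Real.cos φ) ^ 2 + V₀ ^ 4 := by nlinarith

set_option maxHeartbeats 1000000 in
/-- The per-radian turn altitude loss `F(V, φ) = (V⁴·cos²φ + V₀⁴)/sin(2φ)` over
the stall-feasible set `{(V, φ) : φ ∈ (0, π/2), V ≥ V_s/√(cos φ)}` is at least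
`V_s⁴ + V₀⁴`, with equality iff `φ = π/4` and `V = 2^(1/4)·V_s`; hence the
altitude-loss-optimal turn is flown at the stall limit with bank angle `π/4`,
and the minimal altitude loss per radian of heading change is
`(2·K_SR/g)·(V_s⁴ + V₀⁴)`. -/
theorem optimal_turn_bank_angle
    (Vs V₀ K_SR g : ℝ) (hVs : 0 < Vs) (hV₀ : 0 < V₀) (hK : 0 < K_SR) (hg : 0 < g) :
    (∀ V φ : ℝ, φ ∈ Set.Ioo 0 (π / 2) → Vs / Real.sqrt (Real.cos φ) ≤ V →
      Vs ^ 4 + V₀ ^ 4 ≤ (V ^ 4 * (Real.cos φ) ^ 2 + V₀ ^ 4) / Real.sin (2 * φ)) ∧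
    (∀ V φ : ℝ, φ ∈ Set.Ioo 0 (π / 2) → Vs / Real.sqrt (Real.cos φ) ≤ V →
      ((V ^ 4 * (Real.cos φ) ^ 2 + V₀ ^ 4) / Real.sin (2 * φ) = Vs ^ 4 + V₀ ^ 4 ↔
        φ = π / 4 ∧ V = 2 ^ ((1 : ℝ) / 4) * Vs)) ∧
    IsLeast {z : ℝ | ∃ V φ : ℝ, φ ∈ Set.Ioo 0 (π / 2) ∧ Vs / Real.sqrt (Real.cos φ) ≤ V ∧
        z = (2 * K_SR / g) * ((V ^ 4 * (Real.cos φ) ^ 2 + V₀ ^ 4) / Real.sin (2 * φ))}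
      ((2 * K_SR / g) * (Vs ^ 4 + V₀ ^ 4)) := by
  have hfeas : Vs / Real.sqrt (Real.cos (π/4)) ≤ 2 ^ ((1:ℝ)/4) * Vs := by
    rw [sqrt_cos_pi_div_four, div_eq_mul_inv, inv_inv, mul_comm]
  have hmem : π/4 ∈ Set.Ioo 0 (π/2) := ⟨by positivity, by linarith [Real.pi_pos]⟩
  have hval : ((2 ^ ((1:ℝ)/4) * Vs) ^ 4 * (Real.cos (π/4)) ^ 2 + V₀ ^ 4) / Real.sin (2 * (π/4))
      = Vs ^ 4 + V₀ ^ 4 := by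
    rw [show 2 * (π/4) = π/2 by ring, Real.sin_pi_div_two, Real.cos_pi_div_four, div_one,
      mul_pow, two_pow_quarter_pow]
    rw [div_pow, Real.sq_sqrt (by norm_num : (0:ℝ) ≤ 2)]
    ring
  refine ⟨fun V φ hφ hV => key_lower Vs V₀ hVs V φ hφ hV, fun V φ hφ hV => ?_, ?_, ?_⟩
  · constructor
    · intro heq
      obtain ⟨h0, h2⟩ := hφ
      have hc : 0 < Real.cos φ := Real.cos_pos_of_mem_Ioo ⟨by linarith [Real.pi_pos], h2⟩
      have hs : 0 < Real.sin (2 * φ) := Real.sin_pos_of_pos_of_lt_pi (by linarith) (by linarith)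
      have hs1 : Real.sin (2*φ) ≤ 1 := Real.sin_le_one _
      have hV0 : 0 < V := lt_of_lt_of_le (by positivity) hV
      have hV4 : Vs ^ 4 ≤ V ^ 4 * (Real.cos φ) ^ 2 := by
        have h1 : (Vs / Real.sqrt (Real.cos φ)) ^ 4 ≤ V ^ 4 :=
          pow_le_pow_left₀ (by positivity) hV 4
        have h2' : (Vs / Real.sqrt (Real.cos φ)) ^ 4 = Vs ^ 4 / (Real.cos φ) ^ 2 := by
          rw [div_pow, show (Real.sqrt (Real.cos φ)) ^ 4 = ((Real.sqrt (Real.cos φ))^2)^2 by ring,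
            Real.sq_sqrt hc.le]
        rw [h2'] at h1
        calc Vs ^ 4 = Vs ^ 4 / (Real.cos φ) ^ 2 * (Real.cos φ) ^ 2 := by field_simp
        _ ≤ V ^ 4 * (Real.cos φ) ^ 2 := by nlinarith
      have hnum : V ^ 4 * (Real.cos φ) ^ 2 + V₀ ^ 4 = (Vs ^ 4 + V₀ ^ 4) * Real.sin (2*φ) := by
        field_simp at heq
        linarith [heq]
      have hApos : (0:ℝ) < Vs ^ 4 + V₀ ^ 4 := by positivity
      have hsin1 : Real.sin (2*φ) = 1 := by nlinarith
      have hphi : φ = π/4 := by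
        have hcos0 : Real.cos (2*φ) = 0 := by
          have := Real.sin_sq_add_cos_sq (2*φ)
          nlinarith
        rcases Real.cos_eq_zero_iff.mp hcos0 with ⟨k, hk⟩
        have hpi := Real.pi_pos
        have hl : (0:ℝ) < 2 * (k:ℝ) + 1 := by nlinarith
        have hu : (2:ℝ) * (k:ℝ) + 1 < 2 := by nlinarith
        have hl' : (0:ℤ) < 2 * k + 1 := by exact_mod_cast hl
        have hu' : (2:ℤ) * k + 1 < 2 := by exact_mod_cast hu
        have hkk : k = 0 := by omega
        rw [hkk] at hk
        simp at hk
        linarith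
      refine ⟨hphi, ?_⟩
      subst hphi
      have hc2 : (Real.cos (π/4))^2 = 1/2 := by
        rw [Real.cos_pi_div_four, div_pow, Real.sq_sqrt (by norm_num : (0:ℝ) ≤ 2)]; norm_num
      rw [hsin1] at hnum
      rw [hc2] at hnum
      set a : ℝ := (2:ℝ) ^ ((1:ℝ)/4) * Vs with ha_def
      have hapos : (0:ℝ) < a := by rw [ha_def]; positivity
      have hV4eq : V ^ 4 = a ^ 4 := by
        rw [ha_def, mul_pow, two_pow_quarter_pow]; nlinarith
      rcases lt_trichotomy V a with h | h | h
      · exact absurd hV4eq (ne_of_lt (pow_lt_pow_left₀ h hV0.le (by norm_num)))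
      · exact h
      · exact absurd hV4eq.symm (ne_of_lt (pow_lt_pow_left₀ h hapos.le (by norm_num)))
    · rintro ⟨h1, h2⟩
      subst h1; subst h2
      exact hval
  · exact ⟨2 ^ ((1:ℝ)/4) * Vs, π/4, hmem, hfeas, by rw [hval]⟩
  · rintro z ⟨V, φ, hφ, hV, rfl⟩
    have := key_lower Vs V₀ hVs V φ hφ hV
    have hc : 0 ≤ 2 * K_SR / g := by positivity
    exact mul_le_mul_of_nonneg_left this hc
end

section
/- Let K_SR > 0, V₀ > 0, let W ∈ ℝ² be a constant wind vector, and let 0 < V_s ≤ V_max with ‖W‖ < V_s. Define M(p) = inf{ t·K_SR·(‖v‖⁴ + V₀⁴)/‖v‖ : t > 0, v ∈ ℝ², V_s ≤ ‖v‖ ≤ V_max, t·(v + W) = p } for p ∈ ℝ². Then for every p ≠ 0, writing e = p/‖p‖, e⊥ for e rotated by π/2, W∥ = ⟨W, e⟩ and W⊥ = ⟨W, e⊥⟩, one has M(p) = ‖p‖ · inf{ K_SR·(V⁴ + V₀⁴) / ( V·(√(V² − W⊥²) + W∥) ) : V ∈ [V_s, V_max] }; i.e., the straight-glide altitude loss over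 displacement p equals the ground distance ‖p‖ times the minimal glide slope f_g(V) in the direction of p. (Note that ‖W‖ < V_s ≤ V ensures V > |W⊥| and √(V² − W⊥²) + W∥ > 0 for all admissible V.) -/
open scoped RealInnerProductSpace Pointwise

/-- Rotation of a planar vector by `π/2`. -/
noncomputable def rot90 (v : EuclideanSpace ℝ (Fin 2)) : EuclideanSpace ℝ (Fin 2) :=
  (WithLp.equiv 2 (Fin 2 → ℝ)).symm ![-(v 1), v 0]

lemma lagrange_sq (W e : EuclideanSpace ℝ (Fin 2)) (he : ‖e‖ = 1) :
    ⟪W, e⟫ ^ 2 + ⟪W, rot90 e⟫ ^ 2 = ‖W‖ ^ 2 := by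
  have h1 : ⟪e, e⟫ = (1 : ℝ) := by
    rw [real_inner_self_eq_norm_sq, he]; norm_num
  have hW : ⟪W, W⟫ = ‖W‖ ^ 2 := real_inner_self_eq_norm_sq W
  rw [← hW]
  simp only [rot90, PiLp.inner_apply, RCLike.inner_apply, conj_trivial,
    Fin.sum_univ_two] at h1 ⊢
  have hr0 : (WithLp.equiv 2 (Fin 2 → ℝ)).symm ![-(e 1), e 0] 0 = -(e 1) := rfl
  have hr1 : (WithLp.equiv 2 (Fin 2 → ℝ)).symm ![-(e 1), e 0] 1 = e 0 := rfl
  rw [hr0, hr1]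
  nlinarith [h1]

set_option maxHeartbeats 1000000 in
/-- The straight-glide altitude loss over a displacement `p ≠ 0` equals the
ground distance `‖p‖` times the minimal glide slope
`f_g(V) = K_SR·(V⁴ + V₀⁴)/(V·(√(V² − W⊥²) + W∥))` over admissible airspeeds
`V ∈ [V_s, V_max]`, where `W∥ = ⟪W, e⟫`, `W⊥ = ⟪W, e⊥⟫` and `e = p/‖p‖`. -/
theorem straightGlideLoss_eq_dist_mul_min_glideSlope
    (K_SR V₀ Vs Vmax : ℝ) (hK : 0 < K_SR) (hV₀ : 0 < V₀)
    (W : EuclideanSpace ℝ (Fin 2))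
    (hVs : 0 < Vs) (hVsVmax : Vs ≤ Vmax) (hW : ‖W‖ < Vs)
    (p : EuclideanSpace ℝ (Fin 2)) (hp : p ≠ 0)
    (e : EuclideanSpace ℝ (Fin 2)) (he : e = ‖p‖⁻¹ • p)
    (Wpar Wperp : ℝ) (hWpar : Wpar = ⟪W, e⟫) (hWperp : Wperp = ⟪W, rot90 e⟫) :
    straightGlideLoss K_SR V₀ Vs Vmax W p =
      ‖p‖ * sInf {z : ℝ | ∃ V : ℝ, Vs ≤ V ∧ V ≤ Vmax ∧
        z = K_SR * (V ^ 4 + V₀ ^ 4) /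
          (V * (Real.sqrt (V ^ 2 - Wperp ^ 2) + Wpar))} := by
  have hpn : (0 : ℝ) < ‖p‖ := norm_pos_iff.mpr hp
  have hen : ‖e‖ = 1 := by
    rw [he, norm_smul, norm_inv, norm_norm, inv_mul_cancel₀ (ne_of_gt hpn)]
  have hlag : Wpar ^ 2 + Wperp ^ 2 = ‖W‖ ^ 2 := by
    rw [hWpar, hWperp]; exact lagrange_sq W e hen
  -- key facts for admissible V
  have key : ∀ V : ℝ, Vs ≤ V → (V ^ 2 - Wperp ^ 2 > Wpar ^ 2 ∧
      0 < Real.sqrt (V ^ 2 - Wperp ^ 2) + Wpar) := by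
    intro V hV
    have hWV : ‖W‖ < V := lt_of_lt_of_le hW hV
    have h1 : Wpar ^ 2 < V ^ 2 - Wperp ^ 2 := by
      nlinarith [norm_nonneg W]
    refine ⟨h1, ?_⟩
    have h2 : |Wpar| < Real.sqrt (V ^ 2 - Wperp ^ 2) := by
      rw [← Real.sqrt_sq_eq_abs]
      exact Real.sqrt_lt_sqrt (sq_nonneg _) h1
    have := neg_lt_of_abs_lt h2
    linarith
  -- the two sets
  set B : Set ℝ := {z : ℝ | ∃ V : ℝ, Vs ≤ V ∧ V ≤ Vmax ∧
        z = K_SR * (V ^ 4 + V₀ ^ 4) /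
          (V * (Real.sqrt (V ^ 2 - Wperp ^ 2) + Wpar))} with hB
  have hset : {z : ℝ | ∃ t : ℝ, ∃ v : EuclideanSpace ℝ (Fin 2),
      0 < t ∧ Vs ≤ ‖v‖ ∧ ‖v‖ ≤ Vmax ∧ t • (v + W) = p ∧
      z = t * (K_SR * (‖v‖ ^ 4 + V₀ ^ 4) / ‖v‖)} = ‖p‖ • B := by
    ext z
    simp only [Set.mem_setOf_eq, Set.mem_smul_set, hB]
    constructor
    · rintro ⟨t, v, ht, hV1, hV2, htv, hz⟩
      set V := ‖v‖ with hVdef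
      have hVpos : 0 < V := lt_of_lt_of_le hVs hV1
      -- v + W = s • e with s = ‖p‖ / t
      have hvW : v + W = (‖p‖ / t) • e := by
        rw [he, smul_smul]
        have hc : ‖p‖ / t * ‖p‖⁻¹ = t⁻¹ := by
          rw [div_mul_eq_mul_div, mul_inv_cancel₀ (ne_of_gt hpn), one_div]
        rw [hc, ← htv, smul_smul, inv_mul_cancel₀ (ne_of_gt ht), one_smul]
      set s : ℝ := ‖p‖ / t with hs
      have hspos : 0 < s := div_pos hpn ht
      -- ‖v‖² = s² - 2 s Wpar + ‖W‖²
      have hnorm : V ^ 2 = s ^ 2 - 2 * s * Wpar + ‖W‖ ^ 2 := by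
        have : v = s • e - W := by rw [← hvW]; abel
        rw [hVdef, this, norm_sub_sq_real, real_inner_smul_left,
          real_inner_comm, ← hWpar, norm_smul, Real.norm_eq_abs,
          abs_of_pos hspos, hen]
        ring
      have hseq : (s - Wpar) ^ 2 = V ^ 2 - Wperp ^ 2 := by
        nlinarith [hlag]
      obtain ⟨hgt, hpos2⟩ := key V hV1
      have hsW : 0 < s - Wpar := by
        rcases lt_or_ge 0 (s - Wpar) with h | h
        · exact h
        · exfalso
          have habs : Wpar ^ 2 < (s - Wpar) ^ 2 := by rw [hseq]; exact hgt
          nlinarith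
      have hsqrt : Real.sqrt (V ^ 2 - Wperp ^ 2) = s - Wpar := by
        rw [← hseq, Real.sqrt_sq (le_of_lt hsW)]
      refine ⟨K_SR * (V ^ 4 + V₀ ^ 4) /
          (V * (Real.sqrt (V ^ 2 - Wperp ^ 2) + Wpar)), ⟨V, hV1, hV2, rfl⟩, ?_⟩
      rw [hsqrt]
      have hs' : s - Wpar + Wpar = s := by ring
      rw [hs', hz]
      have ht' : t = ‖p‖ / s := by
        field_simp [hs]
        rw [hs]; field_simp
      rw [ht']
      field_simp
      rw [smul_eq_mul]
      field_simp
    · rintro ⟨z', ⟨V, hV1, hV2, hz'⟩, hz⟩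
      obtain ⟨hgt, hpos2⟩ := key V hV1
      have hVpos : 0 < V := lt_of_lt_of_le hVs hV1
      set s : ℝ := Real.sqrt (V ^ 2 - Wperp ^ 2) + Wpar with hs
      have hspos : 0 < s := hpos2
      have hnv : ‖s • e - W‖ = V := by
        have h1 : ‖s • e - W‖ ^ 2 = V ^ 2 := by
          rw [norm_sub_sq_real, real_inner_smul_left, real_inner_comm, ← hWpar,
            norm_smul, Real.norm_eq_abs, abs_of_pos hspos, hen]
          have h2 : (s - Wpar) ^ 2 = V ^ 2 - Wperp ^ 2 := by
            rw [hs]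
            have h3 := Real.sq_sqrt (le_of_lt (lt_of_le_of_lt (sq_nonneg Wpar) hgt))
            rw [show Real.sqrt (V ^ 2 - Wperp ^ 2) + Wpar - Wpar
              = Real.sqrt (V ^ 2 - Wperp ^ 2) by ring]
            exact h3
          nlinarith [hlag]
        nlinarith [norm_nonneg (s • e - W)]
      refine ⟨‖p‖ / s, s • e - W, div_pos hpn hspos, ?_, ?_, ?_, ?_⟩
      · rw [hnv]; exact hV1
      · rw [hnv]; exact hV2
      · rw [show s • e - W + W = s • e by abel, smul_smul, he, smul_smul]
        rw [div_mul_cancel₀ _ (ne_of_gt hspos), mul_inv_cancel₀ (ne_of_gt hpn), one_smul]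
      · have key2 : ‖p‖ / s * (K_SR * (V ^ 4 + V₀ ^ 4) / V)
            = ‖p‖ * (K_SR * (V ^ 4 + V₀ ^ 4) / (V * s)) := by
          rw [div_mul_div_comm, mul_comm s V, mul_div_assoc]
        rw [hnv, ← hz, hz', smul_eq_mul]
        exact key2.symm
  unfold straightGlideLoss
  rw [hset, Real.sInf_smul_of_nonneg (norm_nonneg p), smul_eq_mul]
end
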